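/- Let R₁, ..., R_{m+1} be invertible operators on a vector space satisfying the braid relations (R_i R_{i+1} R_i = R_{i+1} R_i R_{i+1}, and R_i R_j = R_j R_i for |i−j| > 1). Define U_k = R_m ⋯ R_{k+1} R_k² R_{k+1}⁻¹ ⋯ R_m⁻¹ for 1 ≤ k ≤ m and T₁ = R_{m+1}. Then [U_k, T₁ U_k T₁] = 0 for each k (relation (5) of the GDAHA). -/
import Mathlib


/-- `conjChain R k m = R m * R (m-1) * ⋯ * R (k+1)` in the group `G`. -/
def conjChain {G : Type*} [Group G] (R : ℕ → G) (k m : ℕ) : G :=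
  (((List.Ico (k + 1) (m + 1)).reverse.map R).prod)

section Aux

variable {G : Type*} [Group G]

lemma braid_sq {x y : G} (h : x * y * x = y * x * y) :
    x ^ 2 * (y * x ^ 2 * y) = (y * x ^ 2 * y) * x ^ 2 := by
  have L : x ^ 2 * (y * x ^ 2 * y) = x * y * x * (y * x * y) := by
    calc x ^ 2 * (y * x ^ 2 * y) = x * (x * y * x) * (x * y) := by
          simp [pow_two, mul_assoc]
    _ = x * (y * x * y) * (x * y) := by rw [h]
    _ = x * y * x * (y * x * y) := by simp [mul_assoc]
  have Rr : (y * x ^ 2 * y) * x ^ 2 = x * y * x * (y * x * y) := by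
    calc (y * x ^ 2 * y) * x ^ 2 = y * x * (x * y * x) * x := by
          simp [pow_two, mul_assoc]
    _ = y * x * (y * x * y) * x := by rw [h]
    _ = y * x * y * (x * y * x) := by simp [mul_assoc]
    _ = x * y * x * (y * x * y) := by rw [← h]
  rw [L, Rr]

/-- If `a` and `T` satisfy the braid relation and `r` commutes with `T`,
then `r⁻¹ * a * r` and `T` also satisfy the braid relation. -/
lemma braid_conj_stable {a r T : G} (h : a * T * a = T * a * T) (hc : Commute r T) :
    (r⁻¹ * a * r) * T * (r⁻¹ * a * r) = T * (r⁻¹ * a * r) * T := by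
  have hT1 : r * T * r⁻¹ = T := by rw [hc.eq, mul_inv_cancel_right]
  have L : (r⁻¹ * a * r) * T * (r⁻¹ * a * r) = r⁻¹ * (a * T * a) * r := by
    calc (r⁻¹ * a * r) * T * (r⁻¹ * a * r)
        = r⁻¹ * a * (r * T * r⁻¹) * (a * r) := by simp [mul_assoc]
      _ = r⁻¹ * a * T * (a * r) := by rw [hT1]
      _ = r⁻¹ * (a * T * a) * r := by simp [mul_assoc]
  have Rr : T * (r⁻¹ * a * r) * T = r⁻¹ * (T * a * T) * r := by
    calc T * (r⁻¹ * a * r) * T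
        = (T * r⁻¹) * a * (r * T) := by simp [mul_assoc]
      _ = (r⁻¹ * T) * a * (T * r) := by rw [← hc.inv_left.eq, ← hc.eq]
      _ = r⁻¹ * (T * a * T) * r := by simp [mul_assoc]
  rw [L, Rr, h]

lemma conjChain_self (R : ℕ → G) (m : ℕ) : conjChain R m m = 1 := by
  simp [conjChain]

lemma conjChain_succ (R : ℕ → G) {k m : ℕ} (hk : k < m) :
    conjChain R k m = conjChain R (k + 1) m * R (k + 1) := by
  unfold conjChain
  rw [List.Ico.eq_cons (by omega : k + 1 < m + 1)]
  simp

lemma commute_conjChain (R : ℕ → G) (x : G) {k m : ℕ}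
    (hx : ∀ j, k + 1 ≤ j → j ≤ m → Commute x (R j)) :
    Commute x (conjChain R k m) := by
  apply Commute.list_prod_right
  intro y hy
  simp only [List.mem_map, List.mem_reverse, List.Ico.mem] at hy
  obtain ⟨j, ⟨hj1, hj2⟩, rfl⟩ := hy
  exact hx j hj1 (by omega)

/-- The band generator satisfies the braid relation with `R (m+1)`. -/
lemma band_braid (R : ℕ → G) (m : ℕ)
    (hbraid : ∀ i, 1 ≤ i → i ≤ m → R i * R (i + 1) * R i = R (i + 1) * R i * R (i + 1))
    (hcomm : ∀ i j, 1 ≤ i → 1 ≤ j → i ≤ m + 1 → j ≤ m + 1 → i + 1 < j →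
      R i * R j = R j * R i) :
    ∀ d k, 1 ≤ k → k + d = m →
      (conjChain R k m * R k * (conjChain R k m)⁻¹) * R (m + 1) *
        (conjChain R k m * R k * (conjChain R k m)⁻¹)
      = R (m + 1) * (conjChain R k m * R k * (conjChain R k m)⁻¹) * R (m + 1) := by
  intro d
  induction d with
  | zero =>
    intro k hk hkm
    rw [Nat.add_zero] at hkm
    subst hkm
    rw [conjChain_self]
    simpa using hbraid k hk le_rfl
  | succ d ih =>
    intro k hk hkm
    have hkm' : k < m := by omega
    have ih' := ih (k + 1) (by omega) (by omega)
    set C : G := conjChain R (k + 1) m with hC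
    set a : G := C * R (k + 1) * C⁻¹ with ha
    have hcC : Commute (R k) C := by
      apply commute_conjChain
      intro j hj1 hj2
      exact hcomm k j hk (by omega) (by omega) (by omega) (by omega)
    have hcT : Commute (R k) (R (m + 1)) :=
      hcomm k (m + 1) hk (by omega) (by omega) (by omega) (by omega)
    have hb : R (k + 1) * R k * (R (k + 1))⁻¹ = (R k)⁻¹ * R (k + 1) * R k := by
      have h := hbraid k hk (by omega)
      calc R (k + 1) * R k * (R (k + 1))⁻¹
          = (R k)⁻¹ * (R k * R (k + 1) * R k) * (R (k + 1))⁻¹ := by simp [mul_assoc]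
        _ = (R k)⁻¹ * (R (k + 1) * R k * R (k + 1)) * (R (k + 1))⁻¹ := by rw [h]
        _ = (R k)⁻¹ * R (k + 1) * R k := by simp [mul_assoc]
    have hband : conjChain R k m * R k * (conjChain R k m)⁻¹ = (R k)⁻¹ * a * R k := by
      rw [conjChain_succ R hkm', ← hC]
      calc C * R (k + 1) * R k * (C * R (k + 1))⁻¹
          = C * (R (k + 1) * R k * (R (k + 1))⁻¹) * C⁻¹ := by
            simp [mul_inv_rev, mul_assoc]
        _ = C * ((R k)⁻¹ * R (k + 1) * R k) * C⁻¹ := by rw [hb]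
        _ = (C * (R k)⁻¹) * R (k + 1) * (R k * C⁻¹) := by simp [mul_assoc]
        _ = ((R k)⁻¹ * C) * R (k + 1) * (C⁻¹ * R k) := by
            rw [← hcC.inv_left.eq, hcC.inv_right.eq]
        _ = (R k)⁻¹ * (C * R (k + 1) * C⁻¹) * R k := by simp [mul_assoc]
        _ = (R k)⁻¹ * a * R k := by rw [← ha]
    rw [hband]
    exact braid_conj_stable ih' hcT

end Aux

theorem gdaha_relation_five (V : Type*) [AddCommGroup V] [Module ℂ V] (m : ℕ)
    (R : ℕ → (Module.End ℂ V)ˣ)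
    (hbraid : ∀ i, 1 ≤ i → i ≤ m → R i * R (i + 1) * R i = R (i + 1) * R i * R (i + 1))
    (hcomm : ∀ i j, 1 ≤ i → 1 ≤ j → i ≤ m + 1 → j ≤ m + 1 → i + 1 < j →
      R i * R j = R j * R i)
    (U : ℕ → (Module.End ℂ V)ˣ)
    (hU : ∀ k, U k = conjChain R k m * (R k) ^ 2 * (conjChain R k m)⁻¹) :
    ∀ k, 1 ≤ k → k ≤ m →
      U k * (R (m + 1) * U k * R (m + 1)) = (R (m + 1) * U k * R (m + 1)) * U k := by
  intro k hk hkm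
  have hUk : U k = (conjChain R k m * R k * (conjChain R k m)⁻¹) ^ 2 := by
    rw [hU k]; simp [pow_two, mul_assoc]
  rw [hUk]
  exact braid_sq (band_braid R m hbraid hcomm (m - k) k hk (by omega))
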